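/- Let G be a finite group acting measurably on a measurable space 𝒳, let X be a random element of 𝒳 whose law is G-invariant, and let f : 𝒳 → G be a measurable map satisfying f(g·x) = g · f(x) for all g ∈ G and x ∈ 𝒳. Then f(X) is uniformly distributed on G. -/

import Mathlib

/-!
Let `ν` be the law of `X`. By equivariance, `{x | g * f x ∈ s} = (g • ·)⁻¹' (f⁻¹' s)`, so
invariance of `ν` gives `ν {x | g * f x ∈ s} = ν (f⁻¹' s)` for every `g`. Summing over `g`,
`|G| · ν (f⁻¹' s) = ∫ #{g | g * f x ∈ s} dν(x) = |s|`, since `g ↦ g * f x` is a bijection of `G`.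
Working with `{x | g * f x ∈ s}` avoids translating `s` inside `G`, whose σ-algebra need not be
translation invariant.
-/

open MeasureTheory

open scoped ENNReal

section

variable {G : Type*} [Group G] [Fintype G]

theorem sum_indicator_one_mul_right (s : Set G) [Fintype s] (a : G) :
    ∑ g : G, s.indicator (1 : G → ℝ≥0∞) (g * a) = Fintype.card s := by
  classical
  calc ∑ g : G, s.indicator (1 : G → ℝ≥0∞) (g * a)
      = ∑ g : G, s.indicator 1 g := Equiv.sum_comp (Equiv.mulRight a) (s.indicator 1)
    _ = Fintype.card s := by
        simp [Set.indicator_apply, Finset.sum_boole, Fintype.card_subtype]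

theorem sum_measure_setOf_mul_mem {α : Type*} [MeasurableSpace α] (μ : Measure α) (φ : α → G)
    (s : Set G) [Fintype s] (hs : ∀ g : G, MeasurableSet {x | g * φ x ∈ s}) :
    ∑ g : G, μ {x | g * φ x ∈ s} = Fintype.card s * μ Set.univ := by
  calc ∑ g : G, μ {x | g * φ x ∈ s}
      = ∑ g : G, ∫⁻ x, s.indicator 1 (g * φ x) ∂μ := by
        refine Finset.sum_congr rfl fun g _ => ?_
        rw [← lintegral_indicator_one (hs g)]
        rfl
    _ = ∫⁻ x, ∑ g : G, s.indicator 1 (g * φ x) ∂μ :=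
        (lintegral_finsetSum _ fun g _ => measurable_one.indicator (hs g)).symm
    _ = Fintype.card s * μ Set.univ := by
        simp only [sum_indicator_one_mul_right, lintegral_const]

end

section

variable {G α : Type*} [Group G] [MeasurableSpace G] [MeasurableSpace α] [MulAction G α]

theorem measure_setOf_mul_mem_eq_of_map_smul {g : G} (hsmul : Measurable fun x : α => g • x)
    {ν : Measure α} (hν : ν.map (fun x => g • x) = ν) {f : α → G} (hf : Measurable f)
    (hfequiv : ∀ x, f (g • x) = g * f x) {s : Set G} (hs : MeasurableSet s) :
    ν {x | g * f x ∈ s} = ν (f ⁻¹' s) := by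
  have hpre : {x | g * f x ∈ s} = (fun x => g • x) ⁻¹' (f ⁻¹' s) := by
    ext x
    simp [hfequiv]
  rw [hpre, ← Measure.map_apply hsmul (hf hs), hν]

theorem map_eq_uniformOfFintype_of_equivariant [Fintype G]
    (hsmul : ∀ g : G, Measurable fun x : α => g • x)
    (ν : Measure α) [IsProbabilityMeasure ν] (hν : ∀ g : G, ν.map (fun x => g • x) = ν)
    {f : α → G} (hf : Measurable f) (hfequiv : ∀ (g : G) (x : α), f (g • x) = g * f x) :
    ν.map f = (PMF.uniformOfFintype G).toMeasure := by
  classical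
  ext s hs
  rw [Measure.map_apply hf hs, PMF.toMeasure_uniformOfFintype_apply (s := s) hs,
    ENNReal.eq_div_iff (by simp) (by simp)]
  have hmeas (g : G) : MeasurableSet {x | g * f x ∈ s} := by
    simpa only [Set.preimage, Function.comp, hfequiv] using (hf.comp (hsmul g)) hs
  calc (Fintype.card G : ℝ≥0∞) * ν (f ⁻¹' s)
      = ∑ g : G, ν {x | g * f x ∈ s} := by
        simp only [measure_setOf_mul_mem_eq_of_map_smul (hsmul _) (hν _) hf (hfequiv _) hs,
          Finset.sum_const, Finset.card_univ, nsmul_eq_mul]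
    _ = Fintype.card s := by
        rw [sum_measure_setOf_mul_mem ν f s hmeas, measure_univ, mul_one]

end

/-- An equivariant statistic of a random variable with `G`-invariant law is uniformly
distributed on the finite group `G`. -/
theorem stmt_5 {G 𝒳 Ω : Type*} [Group G] [Fintype G] [MeasurableSpace G]
    [MeasurableSpace 𝒳] [MeasurableSpace Ω] [MulAction G 𝒳]
    (hsmul : ∀ g : G, Measurable fun x : 𝒳 => g • x)
    (P : Measure Ω) [IsProbabilityMeasure P]
    (X : Ω → 𝒳) (hX : Measurable X)
    (hinvX : ∀ g : G, Measure.map (fun x => g • x) (Measure.map X P) = Measure.map X P)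
    (f : 𝒳 → G) (hf : Measurable f)
    (hfequiv : ∀ (g : G) (x : 𝒳), f (g • x) = g * f x) :
    Measure.map (fun ω => f (X ω)) P = (PMF.uniformOfFintype G).toMeasure := by
  have := Measure.isProbabilityMeasure_map (μ := P) hX.aemeasurable
  rw [← Function.comp_def, ← Measure.map_map hf hX]
  exact map_eq_uniformOfFintype_of_equivariant hsmul _ hinvX hf hfequiv
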